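/- arXiv:2412.17421 — 9 statements merged into one kernel-verified Lean document; each statement's English description precedes it below -/
import Mathlib

section
/- Let (X,d) be a finite ultrametric space with |X| ≥ 2. Then the diametrical graph G_X^d is complete multipartite, i.e., X can be partitioned into k ≥ 2 nonempty sets X_1,...,X_k such that d(u,v) = diam X if and only if u and v lie in different parts. -/
/-- An ultrametric on a type `X`. -/
def IsUltrametricOn {X : Type*} (d : X → X → ℝ) : Prop :=
  (∀ x y, 0 ≤ d x y) ∧ (∀ x y, d x y = d y x) ∧ (∀ x y, d x y = 0 ↔ x = y) ∧
    ∀ x y z, d x y ≤ max (d x z) (d z y)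

/-- For a finite ultrametric space `(X,d)` with `|X| ≥ 2` and diameter `D` (the largest
distance, which is attained), the diametrical graph is complete multipartite: `X` can be
partitioned into `k ≥ 2` nonempty parts such that `d u v = D` exactly when `u` and `v`
lie in different parts. -/
theorem diametrical_graph_complete_multipartite {X : Type*} [Fintype X]
    (d : X → X → ℝ) (hd : IsUltrametricOn d) (hcard : 2 ≤ Fintype.card X)
    (D : ℝ) (hDle : ∀ x y, d x y ≤ D) (hDatt : ∃ x y, d x y = D) :
    ∃ (k : ℕ), 2 ≤ k ∧ ∃ P : X → Fin k, Function.Surjective P ∧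
      ∀ u v, d u v = D ↔ P u ≠ P v := by
  classical
  obtain ⟨hnn, hsymm, hzero, hultra⟩ := hd
  -- D > 0
  obtain ⟨a, b, hab⟩ := Fintype.exists_pair_of_one_lt_card (α := X) (by omega)
  have hDpos : 0 < D := lt_of_lt_of_le (lt_of_le_of_ne (hnn a b)
    (fun h => hab ((hzero a b).mp h.symm))) (hDle a b)
  -- equivalence relation
  let r : X → X → Prop := fun u v => d u v < D
  have hrefl : ∀ x, r x x := fun x => by
    simpa [r, (hzero x x).mpr rfl] using hDpos
  have hsym : ∀ {x y}, r x y → r y x := fun {x y} h => by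
    simpa [r, hsymm y x] using h
  have htrans : ∀ {x y z}, r x y → r y z → r x z := fun {x y z} h1 h2 =>
    lt_of_le_of_lt (hultra x z y) (max_lt h1 h2)
  let s : Setoid X := ⟨r, hrefl, hsym, htrans⟩
  letI : DecidableEq (Quotient s) := Classical.decEq _
  let e := Fintype.equivFin (Quotient s)
  refine ⟨Fintype.card (Quotient s), ?_, fun x => e ⟦x⟧, ?_, ?_⟩
  · obtain ⟨x, y, hxy⟩ := hDatt
    have hxyne : ¬ r x y := by simp [r, hxy]
    have : (⟦x⟧ : Quotient s) ≠ ⟦y⟧ := fun h => hxyne (Quotient.exact h)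
    exact Fintype.one_lt_card_iff.mpr ⟨⟦x⟧, ⟦y⟧, this⟩
  · intro i
    obtain ⟨q, hq⟩ := e.surjective i
    obtain ⟨x, rfl⟩ := Quotient.exists_rep q
    exact ⟨x, hq⟩
  · intro u v
    constructor
    · intro h hP
      have : r u v := Quotient.exact (e.injective hP)
      simp [r, h] at this
    · intro hP
      have : ¬ r u v := fun h => hP (congrArg e (Quotient.sound h))
      exact le_antisymm (hDle u v) (not_lt.mp this)
end

section
/- Let (X,d) be a finite ultrametric space. Then |Sp(X)| ≤ |X|, where Sp(X) = {d(x,y) : x,y ∈ X} is the spectrum of X (the Gomory–Hu inequality). -/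
/-- The spectrum of an ultrametric space: the set of distances between its points. -/
def spectrum' {X : Type*} (d : X → X → ℝ) : Set ℝ := {r | ∃ x y, d x y = r}

namespace IsUltrametricOn

variable {X : Type*} {d : X → X → ℝ}

theorem symm (hd : IsUltrametricOn d) (x y : X) : d x y = d y x := hd.2.1 x y

theorem self_eq (hd : IsUltrametricOn d) (x y : X) : d x x = d y y := by
  rw [(hd.2.2.1 x x).2 rfl, (hd.2.2.1 y y).2 rfl]

theorem le_max (hd : IsUltrametricOn d) (x y z : X) : d x y ≤ max (d x z) (d z y) :=
  hd.2.2.2 x y z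

theorem eq_of_lt (hd : IsUltrametricOn d) {x y z : X} (h : d z y < d z x) :
    d z x = d y x := by
  have hzx : d z x ≤ d y x := by
    simpa [h.not_ge] using hd.le_max z x y
  have hyx : d y x ≤ d z x := by
    simpa [hd.symm y z, h.le] using hd.le_max y x z
  exact hzx.antisymm hyx

theorem image₂_insert_subset [DecidableEq X] (hd : IsUltrametricOn d) {s : Finset X} {z m : X} (hm : m ∈ s)
    (hmin : ∀ x ∈ s, d z m ≤ d z x) :
    Finset.image₂ d (insert z s) (insert z s) ⊆ insert (d z m) (Finset.image₂ d s s) := by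
  have hnew : ∀ x ∈ s, d z x ∈ insert (d z m) (Finset.image₂ d s s) := by
    intro x hx
    rcases (hmin x hx).eq_or_lt with heq | hlt
    · exact Finset.mem_insert.2 (.inl heq.symm)
    · exact Finset.mem_insert_of_mem (hd.eq_of_lt hlt ▸ Finset.mem_image₂_of_mem hm hx)
  intro r hr
  obtain ⟨x, hx, y, hy, rfl⟩ := Finset.mem_image₂.1 hr
  rcases Finset.mem_insert.1 hx with hxz | hx <;> rcases Finset.mem_insert.1 hy with hyz | hy
  · rw [hxz, hyz, hd.self_eq z m]
    exact Finset.mem_insert_of_mem (Finset.mem_image₂_of_mem hm hm)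
  · exact hxz ▸ hnew y hy
  · rw [hyz, hd.symm x z]
    exact hnew x hx
  · exact Finset.mem_insert_of_mem (Finset.mem_image₂_of_mem hx hy)

theorem card_image₂_le (hd : IsUltrametricOn d) (s : Finset X) :
    (Finset.image₂ d s s).card ≤ s.card := by
  classical
  induction s using Finset.induction_on with
  | empty => simp
  | insert z s hz ih =>
    rcases s.eq_empty_or_nonempty with rfl | hs
    · simp
    obtain ⟨m, hm, hmin⟩ := s.exists_min_image (d z) hs
    calc (Finset.image₂ d (insert z s) (insert z s)).card
        ≤ (insert (d z m) (Finset.image₂ d s s)).card :=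
          Finset.card_le_card (hd.image₂_insert_subset hm hmin)
      _ ≤ (Finset.image₂ d s s).card + 1 := Finset.card_insert_le _ _
      _ ≤ (insert z s).card := by rw [Finset.card_insert_of_notMem hz]; omega

end IsUltrametricOn

theorem spectrum'_eq_image₂ {X : Type*} [Fintype X] (d : X → X → ℝ) :
    spectrum' d = ↑(Finset.image₂ d Finset.univ Finset.univ) := by
  ext r
  simp [spectrum']

/-- The Gomory–Hu inequality: a finite ultrametric space has at most `|X|` distinct
distances. -/
theorem gomory_hu_inequality {X : Type*} [Fintype X] (d : X → X → ℝ)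
    (hd : IsUltrametricOn d) :
    (spectrum' d).ncard ≤ Fintype.card X := by
  rw [spectrum'_eq_image₂, Set.ncard_coe_finset]
  exact hd.card_image₂_le Finset.univ
end

section
/- Let (X,d) be a finite ultrametric space with |X| ≥ 2 such that |Sp(X)| = |X|. Then every nonempty subspace Y of X also satisfies |Sp(Y)| = |Y|. -/
/-- The spectrum of a subset `Y` of an ultrametric space: distances between points of `Y`. -/
def spectrumOn {X : Type*} (d : X → X → ℝ) (Y : Set X) : Set ℝ :=
  {r | ∃ x ∈ Y, ∃ y ∈ Y, d x y = r}

/-!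
Adding a point `x` to a nonempty finite set `S` adds at most one new distance: if `y₀ ∈ S` is
closest to `x`, then for every `c ∈ S` either `d x c = d x y₀`, or `d x y₀ < d x c` and the
triangle `x y₀ c` is isosceles, so `d x c = d y₀ c` is already a distance in `S`. Hence
`|Sp(Y ∪ T)| ≤ |Sp(Y)| + |T|` for nonempty `Y`, and in particular `|Sp(Y)| ≤ |Y|`. Splitting
`X = Y ∪ (X \ Y)` then gives `|X| = |Sp(X)| ≤ |Sp(Y)| + |X \ Y| ≤ |Y| + |X \ Y| = |X|`, which
forces `|Sp(Y)| = |Y|`.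
-/

section Spectrum

variable {X : Type*} {d : X → X → ℝ}

theorem spectrumOn_eq_image (d : X → X → ℝ) (S : Set X) :
    spectrumOn d S = (fun p : X × X => d p.1 p.2) '' S ×ˢ S := by
  ext r
  simp [spectrumOn]

theorem Set.Finite.spectrumOn {S : Set X} (hS : S.Finite) (d : X → X → ℝ) :
    (spectrumOn d S).Finite := by
  rw [spectrumOn_eq_image]
  exact (hS.prod hS).image _

theorem IsUltrametricOn.dist_self (hd : IsUltrametricOn d) (x : X) : d x x = 0 :=
  (hd.2.2.1 x x).2 rfl

theorem IsUltrametricOn.dist_comm (hd : IsUltrametricOn d) (x y : X) : d x y = d y x :=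
  hd.2.1 x y

theorem IsUltrametricOn.spectrumOn_singleton_subset (hd : IsUltrametricOn d) (x : X) :
    spectrumOn d {x} ⊆ {0} := by
  rintro r ⟨a, rfl, b, rfl, rfl⟩
  exact hd.dist_self _

theorem IsUltrametricOn.dist_eq_of_lt (hd : IsUltrametricOn d) {x y z : X}
    (h : d x y < d x z) : d y z = d x z := by
  obtain ⟨-, symm, -, ultra⟩ := hd
  have hle : d y z ≤ d x z := by
    simpa [symm y x, h.le] using ultra y z x
  have hge : d x z ≤ d y z := by
    by_contra! hlt
    exact (ultra x z y).not_gt (max_lt h hlt)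
  exact hle.antisymm hge

theorem IsUltrametricOn.exists_spectrumOn_insert_subset (hd : IsUltrametricOn d) {S : Set X}
    (hS : S.Finite) (hne : S.Nonempty) (x : X) :
    ∃ r, spectrumOn d (insert x S) ⊆ insert r (spectrumOn d S) := by
  obtain ⟨y₀, hy₀, hmin⟩ := S.exists_min_image (d x) hS hne
  refine ⟨d x y₀, ?_⟩
  have new_dist : ∀ c ∈ S, d x c ∈ insert (d x y₀) (spectrumOn d S) := by
    intro c hc
    rcases (hmin c hc).eq_or_lt with heq | hlt
    · exact .inl heq.symm
    · exact .inr ⟨y₀, hy₀, c, hc, hd.dist_eq_of_lt hlt⟩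
  rintro r ⟨a, ha, b, hb, rfl⟩
  rcases ha with rfl | ha <;> rcases hb with rfl | hb
  · exact .inr ⟨y₀, hy₀, y₀, hy₀, by rw [hd.dist_self, hd.dist_self]⟩
  · exact new_dist b hb
  · rw [hd.dist_comm a]
    exact new_dist a ha
  · exact .inr ⟨a, ha, b, hb, rfl⟩

theorem IsUltrametricOn.ncard_spectrumOn_insert_le (hd : IsUltrametricOn d) {S : Set X}
    (hS : S.Finite) (hne : S.Nonempty) (x : X) :
    (spectrumOn d (insert x S)).ncard ≤ (spectrumOn d S).ncard + 1 := by
  obtain ⟨r, hr⟩ := hd.exists_spectrumOn_insert_subset hS hne x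
  calc (spectrumOn d (insert x S)).ncard ≤ (insert r (spectrumOn d S)).ncard :=
        Set.ncard_le_ncard hr ((hS.spectrumOn d).insert r)
    _ ≤ (spectrumOn d S).ncard + 1 := Set.ncard_insert_le r _

theorem IsUltrametricOn.ncard_spectrumOn_union_le (hd : IsUltrametricOn d) {Y T : Set X}
    (hY : Y.Finite) (hne : Y.Nonempty) (hT : T.Finite) :
    (spectrumOn d (Y ∪ T)).ncard ≤ (spectrumOn d Y).ncard + T.ncard := by
  induction T, hT using Set.Finite.induction_on with
  | empty => simp
  | @insert a T ha hT ih =>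
    rw [Set.union_insert, Set.ncard_insert_of_notMem ha hT]
    have := hd.ncard_spectrumOn_insert_le (hY.union hT) (hne.mono Set.subset_union_left) a
    omega

theorem IsUltrametricOn.ncard_spectrumOn_le (hd : IsUltrametricOn d) {Y : Set X}
    (hY : Y.Finite) : (spectrumOn d Y).ncard ≤ Y.ncard := by
  rcases Y.eq_empty_or_nonempty with rfl | ⟨y, hy⟩
  · simp [spectrumOn]
  have hsplit : {y} ∪ Y \ {y} = Y := Set.union_sdiff_cancel (Set.singleton_subset_iff.2 hy)
  have hunion := hd.ncard_spectrumOn_union_le (Set.finite_singleton y) (Set.singleton_nonempty y)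
    (hY.sdiff (t := {y}))
  have hpoint : (spectrumOn d {y}).ncard ≤ 1 :=
    (Set.ncard_le_ncard (hd.spectrumOn_singleton_subset y)).trans (Set.ncard_singleton 0).le
  rw [hsplit, Set.ncard_sdiff_singleton_of_mem hy] at hunion
  have := (Set.ncard_pos hY).2 ⟨y, hy⟩
  omega

end Spectrum

theorem gomory_hu_extremal_hereditary_general {X : Type*} [Fintype X] (d : X → X → ℝ)
    (hd : IsUltrametricOn d)
    (hX : (spectrumOn d (Set.univ : Set X)).ncard = Fintype.card X)
    (Y : Set X) (hY : Y.Nonempty) :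
    (spectrumOn d Y).ncard = Y.ncard := by
  have hsplit : Y ∪ Yᶜ = Set.univ := Y.union_compl_self
  have hcard : Yᶜ.ncard + Y.ncard = Fintype.card X := by
    rw [add_comm, Set.ncard_add_ncard_compl, Nat.card_eq_fintype_card]
  have hunion := hd.ncard_spectrumOn_union_le Y.toFinite hY Yᶜ.toFinite
  have hsub := hd.ncard_spectrumOn_le Y.toFinite
  rw [hsplit, hX] at hunion
  omega

/-- If a finite ultrametric space `X` with `|X| ≥ 2` satisfies `|Sp(X)| = |X|`, then every
nonempty subspace `Y` of `X` satisfies `|Sp(Y)| = |Y|`. -/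
theorem gomory_hu_extremal_hereditary {X : Type*} [Fintype X] (d : X → X → ℝ)
    (hd : IsUltrametricOn d) (hcard : 2 ≤ Fintype.card X)
    (hX : (spectrumOn d (Set.univ : Set X)).ncard = Fintype.card X)
    (Y : Set X) (hY : Y.Nonempty) :
    (spectrumOn d Y).ncard = Y.ncard :=
  gomory_hu_extremal_hereditary_general d hd hX Y hY
end

section
/- Let (X,d) be a finite ultrametric space with |X| ≥ 2 such that |Sp(X)| = |X|. Then X contains no equilateral triangle, i.e., there do not exist three distinct points pairwise equidistant. -/
noncomputable def specF {X : Type*} (d : X → X → ℝ) (s : Finset X) : Finset ℝ :=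
  (s ×ˢ s).image fun p => d p.1 p.2

lemma mem_specF {X : Type*} {d : X → X → ℝ} {s : Finset X} {r : ℝ} :
    r ∈ specF d s ↔ ∃ x ∈ s, ∃ y ∈ s, d x y = r := by
  simp [specF]
  tauto

lemma specKey {X : Type*} [DecidableEq X] {d : X → X → ℝ} (hd : IsUltrametricOn d) :
    ∀ s : Finset X, s.Nonempty → (specF d s).card ≤ s.card ∧
      ((∃ x ∈ s, ∃ y ∈ s, ∃ z ∈ s, x ≠ y ∧ y ≠ z ∧ x ≠ z ∧ d x y = d y z ∧ d x y = d x z)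
        → (specF d s).card + 1 ≤ s.card) := by
  classical
  obtain ⟨hpos, hsymm, hzero, hineq⟩ := hd
  intro s
  induction s using Finset.strongInduction with
  | _ s ih =>
    intro hs
    obtain ⟨a0, ha0⟩ := hs
    have h0 : ∀ u : X, u ∈ s → (0:ℝ) ∈ specF d s := fun u hu =>
      mem_specF.2 ⟨u, hu, u, hu, (hzero u u).2 rfl⟩
    have hne : (specF d s).Nonempty := ⟨0, h0 a0 ha0⟩
    set M := (specF d s).max' hne with hMdef
    have hMmem := (specF d s).max'_mem hne
    obtain ⟨x0, hx0, y0, hy0, hxy0⟩ := mem_specF.1 hMmem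
    have hle : ∀ u ∈ s, ∀ v ∈ s, d u v ≤ M := fun u hu v hv =>
      Finset.le_max' _ _ (mem_specF.2 ⟨u, hu, v, hv, rfl⟩)
    -- key split fact
    have hsplit : ∀ a ∈ s, ∀ u ∈ s, d a u < M → ∀ v ∈ s, ¬ d a v < M → d u v = M := by
      intro a ha u hu hau v hv hav
      have havM : d a v = M := le_antisymm (hle a ha v hv) (not_lt.1 hav)
      have h1 : d u v ≤ max (d u a) (d a v) := hineq u v a
      have h2 : d a v ≤ max (d a u) (d u v) := hineq a v u
      have hsym : d u a = d a u := hsymm u a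
      by_contra hne'
      have hlt : d u v < M := lt_of_le_of_ne (by
        calc d u v ≤ max (d u a) (d a v) := h1
          _ ≤ M := max_le (by rw [hsym]; exact le_of_lt hau) (le_of_eq havM)) hne'
      have : max (d a u) (d u v) < M := max_lt hau hlt
      rw [havM] at h2
      linarith
    -- the complement of any "ball" is nonempty (if M is the max and is attained)
    have hCne : ∀ a ∈ s, ∃ c ∈ s, ¬ d a c < M := by
      intro a ha
      have h1 : d x0 y0 ≤ max (d x0 a) (d a y0) := hineq x0 y0 a
      rw [hxy0] at h1
      rcases le_max_iff.1 h1 with h | h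
      · exact ⟨x0, hx0, by rw [hsymm a x0]; exact not_lt.2 h⟩
      · exact ⟨y0, hy0, not_lt.2 h⟩
    -- main containment
    have core : ∀ a ∈ s, 0 < M →
        specF d s ⊆ specF d (s.filter fun t => d a t < M) ∪
          ((specF d (s \ s.filter fun t => d a t < M)).erase 0 ∪ {M}) := by
      intro a ha hM0 r hr
      set B := s.filter (fun t => d a t < M) with hB
      set C := s \ B with hC
      have haB : a ∈ B := Finset.mem_filter.2 ⟨ha, by rw [(hzero a a).2 rfl]; exact hM0⟩
      obtain ⟨u, hu, v, hv, huv⟩ := mem_specF.1 hr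
      by_cases hub : u ∈ B
      · by_cases hvb : v ∈ B
        · exact Finset.mem_union_left _ (mem_specF.2 ⟨u, hub, v, hvb, huv⟩)
        · have : d u v = M := hsplit a ha u hu
            (Finset.mem_filter.1 hub).2 v hv (fun h => hvb (Finset.mem_filter.2 ⟨hv, h⟩))
          exact Finset.mem_union_right _ (Finset.mem_union_right _ (by simp [← huv, this]))
      · have huc : u ∈ C := Finset.mem_sdiff.2 ⟨hu, hub⟩
        by_cases hvb : v ∈ B
        · have : d v u = M := hsplit a ha v hv
            (Finset.mem_filter.1 hvb).2 u hu (fun h => hub (Finset.mem_filter.2 ⟨hu, h⟩))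
          rw [hsymm v u] at this
          exact Finset.mem_union_right _ (Finset.mem_union_right _ (by simp [← huv, this]))
        · have hvc : v ∈ C := Finset.mem_sdiff.2 ⟨hv, hvb⟩
          by_cases hr0 : r = 0
          · exact Finset.mem_union_left _
              (mem_specF.2 ⟨a, haB, a, haB, by rw [(hzero a a).2 rfl, hr0]⟩)
          · exact Finset.mem_union_right _ (Finset.mem_union_left _
              (Finset.mem_erase.2 ⟨hr0, mem_specF.2 ⟨u, huc, v, hvc, huv⟩⟩))
    -- reusable card bookkeeping
    have bookkeeping : ∀ a ∈ s, 0 < M →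
        (specF d s).card ≤ (specF d (s.filter fun t => d a t < M)).card
          + ((specF d (s \ s.filter fun t => d a t < M)).erase 0 ∪ {M}).card := by
      intro a ha hM0
      calc (specF d s).card ≤ _ := Finset.card_le_card (core a ha hM0)
        _ ≤ _ := Finset.card_union_le _ _
    have hBCcard : ∀ a : X, (s \ s.filter (fun t => d a t < M)).card
        + (s.filter fun t => d a t < M).card = s.card := fun a =>
      Finset.card_sdiff_add_card_eq_card (Finset.filter_subset _ s)
    have hMnonneg : (0:ℝ) ≤ M := Finset.le_max' _ _ (h0 a0 ha0)
    constructor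
    · -- |Sp| ≤ |s|
      rcases eq_or_lt_of_le hMnonneg with hM0 | hM0
      · -- all distances are 0
        have hsub : specF d s ⊆ {0} := by
          intro r hr
          obtain ⟨u, hu, v, hv, huv⟩ := mem_specF.1 hr
          have h1 := hle u hu v hv
          have h2 := hpos u v
          simp only [Finset.mem_singleton]
          rw [← huv]; linarith
        calc (specF d s).card ≤ ({0} : Finset ℝ).card := Finset.card_le_card hsub
          _ = 1 := Finset.card_singleton _
          _ ≤ s.card := Finset.one_le_card.2 ⟨a0, ha0⟩
      · set B := s.filter (fun t => d x0 t < M) with hB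
        set C := s \ B with hC
        have hx0B : x0 ∈ B := Finset.mem_filter.2 ⟨hx0, by rw [(hzero x0 x0).2 rfl]; exact hM0⟩
        obtain ⟨c, hcs, hc⟩ := hCne x0 hx0
        have hcC : c ∈ C := Finset.mem_sdiff.2 ⟨hcs, fun h => hc (Finset.mem_filter.1 h).2⟩
        have hBss : B ⊂ s := Finset.ssubset_iff_of_subset (Finset.filter_subset _ s) |>.2
          ⟨c, hcs, fun h => hc (Finset.mem_filter.1 h).2⟩
        have hCss : C ⊂ s := Finset.ssubset_iff_of_subset (Finset.sdiff_subset) |>.2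
          ⟨x0, hx0, fun h => (Finset.mem_sdiff.1 h).2 hx0B⟩
        have ihB := (ih B hBss ⟨x0, hx0B⟩).1
        have ihC := (ih C hCss ⟨c, hcC⟩).1
        have h0C : (0:ℝ) ∈ specF d C := mem_specF.2 ⟨c, hcC, c, hcC, (hzero c c).2 rfl⟩
        have h1C : 1 ≤ (specF d C).card := Finset.one_le_card.2 ⟨0, h0C⟩
        have herase : ((specF d C).erase 0).card = (specF d C).card - 1 :=
          Finset.card_erase_of_mem h0C
        have hb := bookkeeping x0 hx0 hM0
        rw [← hB, ← hC] at hb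
        have hu : ((specF d C).erase 0 ∪ {M}).card ≤ ((specF d C).erase 0).card + 1 := by
          calc _ ≤ _ := Finset.card_union_le _ _
            _ = _ := by rw [Finset.card_singleton]
        have hBC := hBCcard x0
        rw [← hB, ← hC] at hBC
        omega
    · -- equilateral triangle ⇒ |Sp| + 1 ≤ |s|
      rintro ⟨x, hxs, y, hys, z, hzs, hxy, hyz, hxz, he1, he2⟩
      have hr0 : 0 < d x y := lt_of_le_of_ne (hpos x y) (fun h => hxy ((hzero x y).1 h.symm))
      have hM0 : 0 < M := lt_of_lt_of_le hr0 (hle x hxs y hys)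
      set B := s.filter (fun t => d x t < M) with hB
      set C := s \ B with hC
      have hxB : x ∈ B := Finset.mem_filter.2 ⟨hxs, by rw [(hzero x x).2 rfl]; exact hM0⟩
      obtain ⟨c, hcs, hc⟩ := hCne x hxs
      have hcC : c ∈ C := Finset.mem_sdiff.2 ⟨hcs, fun h => hc (Finset.mem_filter.1 h).2⟩
      have hBss : B ⊂ s := Finset.ssubset_iff_of_subset (Finset.filter_subset _ s) |>.2
        ⟨c, hcs, fun h => hc (Finset.mem_filter.1 h).2⟩
      have hCss : C ⊂ s := Finset.ssubset_iff_of_subset (Finset.sdiff_subset) |>.2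
        ⟨x, hxs, fun h => (Finset.mem_sdiff.1 h).2 hxB⟩
      have ihC := (ih C hCss ⟨c, hcC⟩).1
      have h0C : (0:ℝ) ∈ specF d C := mem_specF.2 ⟨c, hcC, c, hcC, (hzero c c).2 rfl⟩
      have h1C : 1 ≤ (specF d C).card := Finset.one_le_card.2 ⟨0, h0C⟩
      have herase : ((specF d C).erase 0).card = (specF d C).card - 1 :=
        Finset.card_erase_of_mem h0C
      have hb := bookkeeping x hxs hM0
      rw [← hB, ← hC] at hb
      have hBC := hBCcard x
      rw [← hB, ← hC] at hBC
      by_cases hcase : d x y < M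
      · -- the triangle lies inside B
        have hyB : y ∈ B := Finset.mem_filter.2 ⟨hys, hcase⟩
        have hzB : z ∈ B := Finset.mem_filter.2 ⟨hzs, by rw [← he2]; exact hcase⟩
        have ihB := (ih B hBss ⟨x, hxB⟩).2
          ⟨x, hxB, y, hyB, z, hzB, hxy, hyz, hxz, he1, he2⟩
        have hu : ((specF d C).erase 0 ∪ {M}).card ≤ ((specF d C).erase 0).card + 1 := by
          calc _ ≤ _ := Finset.card_union_le _ _
            _ = _ := by rw [Finset.card_singleton]
        omega
      · -- the triangle has side M, so M is already a distance within C
        have hdxy : d x y = M := le_antisymm (hle x hxs y hys) (not_lt.1 hcase)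
        have hyC : y ∈ C := Finset.mem_sdiff.2
          ⟨hys, fun h => hcase (Finset.mem_filter.1 h).2⟩
        have hzC : z ∈ C := Finset.mem_sdiff.2
          ⟨hzs, fun h => hcase (by rw [he2]; exact (Finset.mem_filter.1 h).2)⟩
        have hMC : M ∈ (specF d C).erase 0 := Finset.mem_erase.2
          ⟨ne_of_gt hM0, mem_specF.2 ⟨y, hyC, z, hzC, by rw [← he1, hdxy]⟩⟩
        have hu : (specF d C).erase 0 ∪ {M} = (specF d C).erase 0 :=
          Finset.union_eq_left.2 (Finset.singleton_subset_iff.2 hMC)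
        have ihB := (ih B hBss ⟨x, hxB⟩).1
        rw [hu] at hb
        omega

/-- A finite ultrametric space with `|Sp(X)| = |X|` contains no equilateral triangle. -/
theorem gomory_hu_extremal_no_equilateral {X : Type*} [Fintype X] (d : X → X → ℝ)
    (hd : IsUltrametricOn d) (hcard : 2 ≤ Fintype.card X)
    (hX : (spectrum' d).ncard = Fintype.card X) :
    ¬∃ x y z : X, x ≠ y ∧ y ≠ z ∧ x ≠ z ∧ d x y = d y z ∧ d x y = d x z := by
  classical
  rintro ⟨x, y, z, hxy, hyz, hxz, he1, he2⟩
  have hspec : spectrum' d = ↑(specF d (Finset.univ : Finset X)) := by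
    ext r
    simp [spectrum', mem_specF]
  have hcard' : (specF d (Finset.univ : Finset X)).card = Fintype.card X := by
    rw [hspec, Set.ncard_coe_finset] at hX
    simpa using hX
  have := (specKey hd Finset.univ ⟨x, Finset.mem_univ x⟩).2
    ⟨x, Finset.mem_univ x, y, Finset.mem_univ y, z, Finset.mem_univ z,
      hxy, hyz, hxz, he1, he2⟩
  rw [hcard', Finset.card_univ] at this
  omega
end

section
/- Let (X,d) be a finite ultrametric space with |X| ≥ 2 and let B be the set of distinct closed balls of X (its ballean). If the diameters of distinct nonsingleton balls of X are distinct, then |Sp(X)| = |B| − |X| + 1. -/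
/-- The ballean of `(X,d)`: the set of all closed balls, viewed as subsets of `X`. -/
def ballean {X : Type*} (d : X → X → ℝ) : Set (Set X) :=
  {B | ∃ c r, 0 ≤ r ∧ B = {x | d x c ≤ r}}

/-- The diameter of a subset `B`: the supremum of distances between points of `B`. -/
noncomputable def setDiam {X : Type*} (d : X → X → ℝ) (B : Set X) : ℝ :=
  sSup {r | ∃ x ∈ B, ∃ y ∈ B, d x y = r}

/-- If the diameters of distinct nonsingleton balls of a finite ultrametric space are
distinct, then `|Sp(X)| = |𝐁_X| − |X| + 1` (stated additively). -/
theorem spectrum_card_of_injective_diameters {X : Type*} [Fintype X] (d : X → X → ℝ)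
    (hd : IsUltrametricOn d) (hcard : 2 ≤ Fintype.card X)
    (hdiam : ∀ B₁ ∈ ballean d, ∀ B₂ ∈ ballean d, 1 < B₁.ncard → 1 < B₂.ncard →
      setDiam d B₁ = setDiam d B₂ → B₁ = B₂) :
    (spectrum' d).ncard + Fintype.card X = (ballean d).ncard + 1 := by
  obtain ⟨hpos, hsymm, hzero, hmax⟩ := hd
  have hne : Nonempty X := Fintype.card_pos_iff.mp (by omega)
  have hfinSpec : (spectrum' d).Finite := by
    have h : spectrum' d = Set.range (fun p : X × X => d p.1 p.2) := by
      ext r; simp [spectrum', Prod.exists]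
    rw [h]; exact Set.finite_range _
  have hDfin : ∀ B : Set X, {r | ∃ x ∈ B, ∃ y ∈ B, d x y = r}.Finite := by
    intro B
    have h : {r | ∃ x ∈ B, ∃ y ∈ B, d x y = r} = Set.image2 d B B := by
      ext r; simp [Set.mem_image2]
    rw [h]; exact Set.Finite.image2 _ (Set.toFinite B) (Set.toFinite B)
  -- singleton balls and nonsingleton balls
  set S1 : Set (Set X) := {B | B ∈ ballean d ∧ B.ncard = 1} with hS1def
  set S2 : Set (Set X) := {B | B ∈ ballean d ∧ 1 < B.ncard} with hS2def
  -- every ball is nonempty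
  have hball_ne : ∀ B ∈ ballean d, B.Nonempty := by
    rintro B ⟨c, r, hr, rfl⟩
    exact ⟨c, by simpa [(hzero c c).mpr rfl] using hr⟩
  -- singleton balls biject with X
  have hsingle_ball : ∀ x : X, ({x} : Set X) ∈ ballean d := by
    intro x
    refine ⟨x, 0, le_refl 0, ?_⟩
    ext y
    simp only [Set.mem_singleton_iff, Set.mem_setOf_eq]
    constructor
    · rintro rfl; exact le_of_eq ((hzero y y).mpr rfl)
    · intro h; exact (hzero y x).mp (le_antisymm h (hpos y x))
  have hS1eq : S1 = Set.range (fun x : X => ({x} : Set X)) := by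
    ext B
    constructor
    · rintro ⟨hB, h1⟩
      obtain ⟨x, rfl⟩ := Set.ncard_eq_one.mp h1
      exact ⟨x, rfl⟩
    · rintro ⟨x, rfl⟩
      exact ⟨hsingle_ball x, Set.ncard_singleton x⟩
  have hS1card : S1.ncard = Fintype.card X := by
    rw [hS1eq, ← Set.image_univ,
      Set.ncard_image_of_injective _ (fun a b h => Set.singleton_injective h),
      Set.ncard_univ, Nat.card_eq_fintype_card]
  -- diameters of nonsingleton balls lie in the nonzero spectrum
  have hdiam_mem : ∀ B : Set X, 1 < B.ncard → setDiam d B ∈ spectrum' d \ {0} := by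
    intro B hB
    obtain ⟨a, b, ha, hb, hab⟩ := (Set.one_lt_ncard_iff (Set.toFinite B)).mp hB
    have hDne : {r | ∃ x ∈ B, ∃ y ∈ B, d x y = r}.Nonempty := ⟨d a b, a, ha, b, hb, rfl⟩
    have hmem : setDiam d B ∈ {r | ∃ x ∈ B, ∃ y ∈ B, d x y = r} :=
      hDne.csSup_mem (hDfin B)
    obtain ⟨x, hx, y, hy, hxy⟩ := hmem
    have habpos : 0 < d a b :=
      lt_of_le_of_ne (hpos a b) (fun h => hab ((hzero a b).mp h.symm))
    have hle : d a b ≤ setDiam d B :=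
      le_csSup (hDfin B).bddAbove ⟨a, ha, b, hb, rfl⟩
    exact ⟨⟨x, y, hxy⟩, by simpa using (lt_of_lt_of_le habpos hle).ne'⟩
  -- the image of nonsingleton balls under setDiam is exactly the nonzero spectrum
  have himg : setDiam d '' S2 = spectrum' d \ {0} := by
    apply Set.Subset.antisymm
    · rintro _ ⟨B, ⟨_, hB⟩, rfl⟩
      exact hdiam_mem B hB
    · rintro t ⟨⟨x, y, hxy⟩, ht0⟩
      have htpos : 0 < t := lt_of_le_of_ne (hxy ▸ hpos x y) (Ne.symm (by simpa using ht0))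
      have hxyne : x ≠ y := fun h => by
        rw [h, (hzero y y).mpr rfl] at hxy; exact ht0 hxy.symm
      set B : Set X := {z | d z x ≤ t} with hBdef
      have hBball : B ∈ ballean d := ⟨x, t, htpos.le, rfl⟩
      have hxB : x ∈ B := by simp [hBdef, (hzero x x).mpr rfl, htpos.le]
      have hyB : y ∈ B := by
        show d y x ≤ t
        rw [hsymm y x, hxy]
      have hBcard : 1 < B.ncard :=
        (Set.one_lt_ncard_iff (Set.toFinite B)).mpr ⟨x, y, hxB, hyB, hxyne⟩
      refine ⟨B, ⟨hBball, hBcard⟩, ?_⟩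
      -- setDiam d B = t
      have hub : ∀ r ∈ {r | ∃ a ∈ B, ∃ b ∈ B, d a b = r}, r ≤ t := by
        rintro r ⟨a, ha, b, hb, rfl⟩
        calc d a b ≤ max (d a x) (d x b) := hmax a b x
          _ ≤ t := max_le ha (by rw [hsymm x b]; exact hb)
      have htmem : t ∈ {r | ∃ a ∈ B, ∃ b ∈ B, d a b = r} := ⟨x, hxB, y, hyB, hxy⟩
      exact le_antisymm (csSup_le ⟨t, htmem⟩ hub) (le_csSup (hDfin B).bddAbove htmem)
  have hinjS2 : Set.InjOn (setDiam d) S2 := fun B₁ h₁ B₂ h₂ h =>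
    hdiam B₁ h₁.1 B₂ h₂.1 h₁.2 h₂.2 h
  have hS2card : S2.ncard = (spectrum' d \ {0}).ncard := by
    rw [← himg, Set.ncard_image_of_injOn hinjS2]
  -- spectrum contains 0
  have h0mem : (0 : ℝ) ∈ spectrum' d := by
    obtain ⟨x⟩ := hne
    exact ⟨x, x, (hzero x x).mpr rfl⟩
  have hSpecCount : (spectrum' d \ {0}).ncard + 1 = (spectrum' d).ncard :=
    Set.ncard_diff_singleton_add_one h0mem hfinSpec
  -- split the ballean
  have hsplit : ballean d = S1 ∪ S2 := by
    ext B
    constructor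
    · intro hB
      have h1 : 0 < B.ncard := (Set.ncard_pos (Set.toFinite B)).mpr (hball_ne B hB)
      rcases Nat.lt_or_ge 1 B.ncard with h | h
      · exact Or.inr ⟨hB, h⟩
      · exact Or.inl ⟨hB, by omega⟩
    · rintro (h | h) <;> exact h.1
  have hdisj : Disjoint S1 S2 := by
    rw [Set.disjoint_left]
    rintro B ⟨_, h1⟩ ⟨_, h2⟩
    omega
  have hBcount : (ballean d).ncard = S1.ncard + S2.ncard := by
    rw [hsplit, Set.ncard_union_eq hdisj (Set.toFinite S1) (Set.toFinite S2)]
  omega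
end

section
/- Let (X,d) be a finite ultrametric space with |X| ≥ 2. Then the number of distinct balls of X satisfies |B_X| ≤ 2|X| − 1, with equality if and only if every nonsingleton ball B of X can be written as a disjoint union of exactly two balls B_1, B_2 such that d(x_1,x_2) = diam B for all x_1 ∈ B_1, x_2 ∈ B_2. -/
namespace UltraProof
set_option linter.unusedSectionVars false

variable {X : Type*} [Fintype X] {d : X → X → ℝ}

lemma dself (hd : IsUltrametricOn d) (x : X) : d x x = 0 := (hd.2.2.1 x x).2 rfl

lemma diamSet_finite (B : Set X) : {r | ∃ x ∈ B, ∃ y ∈ B, d x y = r}.Finite := by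
  have : {r | ∃ x ∈ B, ∃ y ∈ B, d x y = r} ⊆ (fun p : X × X => d p.1 p.2) '' Set.univ := by
    rintro r ⟨x, _, y, _, rfl⟩; exact ⟨(x, y), trivial, rfl⟩
  exact (Set.toFinite _).image _ |>.subset this

lemma le_setDiam (hx : x ∈ B) (hy : y ∈ B) : d x y ≤ setDiam d B :=
  le_csSup (diamSet_finite B).bddAbove ⟨x, hx, y, hy, rfl⟩

lemma setDiam_nonneg (hd : IsUltrametricOn d) {B : Set X} (hB : B.Nonempty) :
    0 ≤ setDiam d B := by
  obtain ⟨x, hx⟩ := hB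
  simpa [dself hd x] using le_setDiam (d := d) hx hx

lemma setDiam_mem {B : Set X} (hB : B.Nonempty) :
    ∃ x ∈ B, ∃ y ∈ B, d x y = setDiam d B := by
  obtain ⟨x, hx⟩ := hB
  have hne : {r | ∃ x ∈ B, ∃ y ∈ B, d x y = r}.Nonempty := ⟨d x x, x, hx, x, hx, rfl⟩
  exact hne.csSup_mem (diamSet_finite B)

lemma ball_nonempty (hd : IsUltrametricOn d) {B : Set X} (hB : B ∈ ballean d) :
    B.Nonempty := by
  obtain ⟨c, r, hr, rfl⟩ := hB
  exact ⟨c, by simp [dself hd c, hr]⟩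

lemma singleton_mem_ballean (hd : IsUltrametricOn d) (x : X) : ({x} : Set X) ∈ ballean d := by
  refine ⟨x, 0, le_refl 0, ?_⟩
  ext y
  simp only [Set.mem_singleton_iff, Set.mem_setOf_eq]
  constructor
  · rintro rfl; simp [dself hd y]
  · intro h; exact (hd.2.2.1 y x).1 (le_antisymm h (hd.1 y x))

/-- Every point of a ball is a center, with the diameter as radius. -/
lemma ball_eq_closedBall_diam (hd : IsUltrametricOn d) {B : Set X} (hB : B ∈ ballean d)
    {c : X} (hc : c ∈ B) : B = {x | d x c ≤ setDiam d B} := by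
  obtain ⟨c₀, r, hr, rfl⟩ := hB
  set B := {x | d x c₀ ≤ r} with hBdef
  have hdiam_le : setDiam d B ≤ r := by
    have hne : {s | ∃ x ∈ B, ∃ y ∈ B, d x y = s}.Nonempty := ⟨d c c, c, hc, c, hc, rfl⟩
    apply csSup_le hne
    rintro s ⟨x, hx, y, hy, rfl⟩
    calc d x y ≤ max (d x c₀) (d c₀ y) := hd.2.2.2 x y c₀
      _ ≤ r := max_le hx (by rw [hd.2.1]; exact hy)
  ext x
  constructor
  · intro hx; exact le_setDiam hx hc
  · intro hx
    show d x c₀ ≤ r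
    calc d x c₀ ≤ max (d x c) (d c c₀) := hd.2.2.2 x c₀ c
      _ ≤ r := max_le (hx.trans hdiam_le) hc


/-- The equivalence class of `c` for the relation `d x y < D`. -/
def cls (d : X → X → ℝ) (D : ℝ) (c : X) : Set X := {x | d x c < D}

lemma mem_cls_self (hd : IsUltrametricOn d) {D : ℝ} (hD : 0 < D) (c : X) :
    c ∈ cls d D c := by simpa [cls, dself hd c] using hD

lemma cls_eq_of_mem (hd : IsUltrametricOn d) {D : ℝ} {c x : X} (hx : x ∈ cls d D c) :
    cls d D x = cls d D c := by
  have hxc : d x c < D := hx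
  ext y
  constructor
  · intro hy
    exact lt_of_le_of_lt (hd.2.2.2 y c x) (max_lt hy hxc)
  · intro hy
    have hcx : d c x < D := by rwa [hd.2.1]
    exact lt_of_le_of_lt (hd.2.2.2 y x c) (max_lt hy hcx)

lemma cls_subset (hd : IsUltrametricOn d) {B : Set X} (hB : B ∈ ballean d)
    {c : X} (hc : c ∈ B) : cls d (setDiam d B) c ⊆ B := by
  intro x hx
  have hx' : d x c < setDiam d B := hx
  rw [ball_eq_closedBall_diam hd hB hc]
  exact le_of_lt hx'

lemma cls_mem_ballean (hd : IsUltrametricOn d) {B : Set X} (hB : B ∈ ballean d)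
    {c : X} (hc : c ∈ B) (hD : 0 < setDiam d B) : cls d (setDiam d B) c ∈ ballean d := by
  set D := setDiam d B
  have hcc : c ∈ cls d D c := mem_cls_self hd hD c
  have hne : (cls d D c).Nonempty := ⟨c, hcc⟩
  refine ⟨c, setDiam d (cls d D c), setDiam_nonneg hd hne, ?_⟩
  have hlt : setDiam d (cls d D c) < D := by
    obtain ⟨a, ha, b, hb, hab⟩ := setDiam_mem (d := d) hne
    rw [← hab]
    refine lt_of_le_of_lt (hd.2.2.2 a b c) (max_lt ha ?_)
    rw [hd.2.1]; exact hb
  ext x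
  constructor
  · intro hx; exact le_setDiam hx hcc
  · intro hx; exact lt_of_le_of_lt hx hlt

lemma exists_not_cls (hd : IsUltrametricOn d) {B : Set X} (hBne : B.Nonempty)
    (hD : 0 < setDiam d B) (c : X) :
    ∃ x ∈ B, x ∉ cls d (setDiam d B) c := by
  set D := setDiam d B
  obtain ⟨a, ha, b, hb, hab⟩ := setDiam_mem (d := d) hBne
  have h := hd.2.2.2 a b c
  rw [hab] at h
  by_cases hac : d a c < D
  · refine ⟨b, hb, ?_⟩
    intro hbc
    have : d c b < D := by rw [hd.2.1]; exact hbc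
    exact absurd (lt_of_le_of_lt h (max_lt hac this)) (lt_irrefl D)
  · exact ⟨a, ha, hac⟩

lemma cls_ssubset (hd : IsUltrametricOn d) {B : Set X} (hB : B ∈ ballean d)
    {c : X} (hc : c ∈ B) (hD : 0 < setDiam d B) : cls d (setDiam d B) c ⊂ B := by
  refine ⟨cls_subset hd hB hc, ?_⟩
  obtain ⟨x, hx, hxn⟩ := exists_not_cls hd (ball_nonempty hd hB) hD c
  intro hsub
  exact hxn (hsub hx)

lemma subball_subset_cls (hd : IsUltrametricOn d) {B B' : Set X} (hB : B ∈ ballean d)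
    (hB' : B' ∈ ballean d) (hsub : B' ⊆ B) (hne : B' ≠ B) {c : X} (hc : c ∈ B') :
    B' ⊆ cls d (setDiam d B) c := by
  set D := setDiam d B
  intro x hx
  by_contra hxc
  have hxcD : D ≤ d x c := le_of_not_gt hxc
  apply hne
  apply Set.Subset.antisymm hsub
  intro y hy
  rw [ball_eq_closedBall_diam hd hB' hc]
  have h1 : d y c ≤ D := le_setDiam hy (hsub hc)
  have h2 : D ≤ setDiam d B' := hxcD.trans (le_setDiam hx hc)
  exact h1.trans h2


lemma ncard_biUnion {α β : Type*} (g : β → Set α) (F : Finset β) :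
    (∀ C ∈ F, (g C).Finite) →
    (∀ C ∈ F, ∀ C' ∈ F, C ≠ C' → Disjoint (g C) (g C')) →
    (⋃ C ∈ F, g C).ncard = ∑ C ∈ F, (g C).ncard := by
  classical
  induction F using Finset.induction_on with
  | empty => simp
  | @insert a s ha ih =>
    intro hfin hdisj
    have h1 : (⋃ C ∈ insert a s, g C) = g a ∪ ⋃ C ∈ s, g C := by
      simp [Set.biUnion_insert]
    rw [h1, Finset.sum_insert ha,
      Set.ncard_union_eq ?_ (hfin a (Finset.mem_insert_self a s)) ?_,
      ih (fun C hC => hfin C (Finset.mem_insert_of_mem hC))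
        (fun C hC C' hC' h => hdisj C (Finset.mem_insert_of_mem hC) C'
          (Finset.mem_insert_of_mem hC') h)]
    · rw [Set.disjoint_iUnion₂_right]
      intro C hC
      exact hdisj a (Finset.mem_insert_self a s) C (Finset.mem_insert_of_mem hC)
        (fun h => ha (h ▸ hC))
    · exact Set.Finite.biUnion s.finite_toSet
        (fun C hC => hfin C (Finset.mem_insert_of_mem hC))

/-- The number of balls contained in `S`. -/
noncomputable def nb (d : X → X → ℝ) (S : Set X) : ℕ :=
  {B' ∈ ballean d | B' ⊆ S}.ncard

/-- A ball splits into two equidistant balls. -/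
def Splits (d : X → X → ℝ) (B : Set X) : Prop :=
  ∃ B₁ ∈ ballean d, ∃ B₂ ∈ ballean d, Disjoint B₁ B₂ ∧ B = B₁ ∪ B₂ ∧
    ∀ x₁ ∈ B₁, ∀ x₂ ∈ B₂, d x₁ x₂ = setDiam d B


lemma key (hd : IsUltrametricOn d) : ∀ n : ℕ, ∀ B ∈ ballean d, B.ncard = n →
    nb d B + 1 ≤ 2 * B.ncard ∧
      (nb d B + 1 = 2 * B.ncard ↔
        ∀ B' ∈ ballean d, B' ⊆ B → 1 < B'.ncard → Splits d B') := by
  intro n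
  induction n using Nat.strong_induction_on with
  | _ n ih =>
  intro B hB hn
  classical
  by_cases hone : B.ncard ≤ 1
  · -- base case : `B` is a singleton
    have hBne := ball_nonempty hd hB
    have h1 : B.ncard = 1 := le_antisymm hone ((Set.ncard_pos (Set.toFinite B)).mpr hBne)
    obtain ⟨x, rfl⟩ := Set.ncard_eq_one.mp h1
    have hset : {B' ∈ ballean d | B' ⊆ ({x} : Set X)} = {({x} : Set X)} := by
      ext B'
      simp only [Set.mem_setOf_eq, Set.mem_singleton_iff]
      constructor
      · rintro ⟨hB', hsub⟩
        exact ((ball_nonempty hd hB').subset_singleton_iff).mp hsub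
      · rintro rfl
        exact ⟨singleton_mem_ballean hd x, le_refl _⟩
    have hnb : nb d ({x} : Set X) = 1 := by rw [nb, hset, Set.ncard_singleton]
    constructor
    · rw [hnb, h1]
    · rw [hnb, h1]
      constructor
      · intro _ B' hB' hsub hcard'
        exfalso
        have : B'.ncard ≤ 1 := by
          have := Set.ncard_le_ncard hsub (Set.toFinite _)
          simpa using this
        omega
      · intro _; rfl
  · -- main case
    push_neg at hone
    have hBfin : B.Finite := Set.toFinite B
    have hBne := ball_nonempty hd hB
    set D := setDiam d B with hDdef
    have hD : 0 < D := by
      obtain ⟨a, b, ha, hb, hab⟩ := (Set.one_lt_ncard_iff hBfin).mp hone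
      have h0 : 0 < d a b := lt_of_le_of_ne (hd.1 a b) (fun h => hab ((hd.2.2.1 a b).mp h.symm))
      exact lt_of_lt_of_le h0 (le_setDiam ha hb)
    -- the classes
    set F : Finset (Set X) := ((fun c => cls d D c) '' B).toFinite.toFinset with hFdef
    have hmemF : ∀ C, C ∈ F ↔ ∃ c ∈ B, cls d D c = C := by
      intro C; rw [hFdef, Set.Finite.mem_toFinset]; simp [Set.mem_image]
    have hFball : ∀ C ∈ F, C ∈ ballean d := by
      intro C hC; obtain ⟨c, hc, rfl⟩ := (hmemF C).mp hC
      exact cls_mem_ballean hd hB hc hD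
    have hFssub : ∀ C ∈ F, C ⊂ B := by
      intro C hC; obtain ⟨c, hc, rfl⟩ := (hmemF C).mp hC
      exact cls_ssubset hd hB hc hD
    have hFne : ∀ C ∈ F, C.Nonempty := by
      intro C hC; obtain ⟨c, hc, rfl⟩ := (hmemF C).mp hC
      exact ⟨c, mem_cls_self hd hD c⟩
    have hFdisj : ∀ C ∈ F, ∀ C' ∈ F, C ≠ C' → Disjoint C C' := by
      intro C hC C' hC' hne
      obtain ⟨c, hc, rfl⟩ := (hmemF C).mp hC
      obtain ⟨c', hc', rfl⟩ := (hmemF C').mp hC'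
      by_contra hdis
      obtain ⟨z, hz, hz'⟩ := Set.not_disjoint_iff.mp hdis
      exact hne ((cls_eq_of_mem hd hz).symm.trans (cls_eq_of_mem hd hz'))
    have hcover : B = ⋃ C ∈ F, C := by
      ext x
      constructor
      · intro hx
        refine Set.mem_biUnion ((hmemF _).mpr ⟨x, hx, rfl⟩) (mem_cls_self hd hD x)
      · intro hx
        obtain ⟨C, hC, hxC⟩ := Set.mem_iUnion₂.mp hx
        exact (hFssub C hC).1 hxC
    have hcardsum : B.ncard = ∑ C ∈ F, C.ncard := by
      rw [hcover, ncard_biUnion _ F (fun C _ => Set.toFinite C) hFdisj]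
    -- decomposition of the set of subballs
    have hdecomp : {B' ∈ ballean d | B' ⊆ B} =
        insert B (⋃ C ∈ F, {B' ∈ ballean d | B' ⊆ C}) := by
      ext B'
      simp only [Set.mem_setOf_eq, Set.mem_insert_iff]
      constructor
      · rintro ⟨hB', hsub⟩
        by_cases hBB : B' = B
        · left; exact hBB
        · right
          obtain ⟨c, hc⟩ := ball_nonempty hd hB'
          refine Set.mem_biUnion ((hmemF _).mpr ⟨c, hsub hc, rfl⟩) ?_
          exact ⟨hB', subball_subset_cls hd hB hB' hsub hBB hc⟩
      · rintro (rfl | h)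
        · exact ⟨hB, le_refl _⟩
        · obtain ⟨C, hC, hB', hsub⟩ := Set.mem_iUnion₂.mp h
          exact ⟨hB', hsub.trans (hFssub C hC).1⟩
    have hBnotmem : B ∉ ⋃ C ∈ F, {B' ∈ ballean d | B' ⊆ C} := by
      intro h
      obtain ⟨C, hC, _, hsub⟩ := Set.mem_iUnion₂.mp h
      exact (hFssub C hC).2 hsub
    have hnbeq : nb d B = 1 + ∑ C ∈ F, nb d C := by
      simp only [nb]
      rw [hdecomp, Set.ncard_insert_of_notMem hBnotmem (Set.toFinite _)]
      rw [ncard_biUnion (fun C => {B' ∈ ballean d | B' ⊆ C}) F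
        (fun C _ => Set.toFinite _) ?_]
      · omega
      · intro C hC C' hC' hne
        rw [Set.disjoint_left]
        rintro B' ⟨hB', hsC⟩ ⟨_, hsC'⟩
        obtain ⟨z, hz⟩ := ball_nonempty hd hB'
        exact Set.disjoint_left.mp (hFdisj C hC C' hC' hne) (hsC hz) (hsC' hz)
    -- there are at least two classes
    have hk2 : 2 ≤ F.card := by
      obtain ⟨a, ha, b, hb, hab⟩ := setDiam_mem (d := d) hBne
      rw [← hDdef] at hab
      have hba : b ∉ cls d D a := by
        intro h
        have h' : d b a < D := h
        rw [hd.2.1 b a, hab] at h'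
        exact absurd h' (lt_irrefl D)
      refine Finset.one_lt_card.mpr ⟨cls d D a, (hmemF _).mpr ⟨a, ha, rfl⟩,
        cls d D b, (hmemF _).mpr ⟨b, hb, rfl⟩, ?_⟩
      intro h
      exact hba (h ▸ mem_cls_self hd hD b)
    -- induction hypothesis for each class
    have ihC : ∀ C ∈ F, nb d C + 1 ≤ 2 * C.ncard ∧
        (nb d C + 1 = 2 * C.ncard ↔
          ∀ B' ∈ ballean d, B' ⊆ C → 1 < B'.ncard → Splits d B') := by
      intro C hC
      exact ih C.ncard (hn ▸ Set.ncard_lt_ncard (hFssub C hC) hBfin) C (hFball C hC) rfl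
    have hsum_le : ∑ C ∈ F, (nb d C + 1) ≤ ∑ C ∈ F, 2 * C.ncard :=
      Finset.sum_le_sum (fun C hC => (ihC C hC).1)
    have hS2 : ∑ C ∈ F, (nb d C + 1) = (∑ C ∈ F, nb d C) + F.card := by
      rw [Finset.sum_add_distrib, Finset.sum_const, smul_eq_mul, mul_one]
    have hS3 : ∑ C ∈ F, 2 * C.ncard = 2 * B.ncard := by
      rw [hcardsum, Finset.mul_sum]
    rw [hS2, hS3] at hsum_le
    constructor
    · omega
    · constructor
      · -- equality implies the splitting condition
        intro heq
        have hkeq : F.card = 2 := by omega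
        have hall : ∀ C ∈ F, nb d C + 1 = 2 * C.ncard := by
          have : ∑ C ∈ F, (nb d C + 1) = ∑ C ∈ F, 2 * C.ncard := by
            rw [hS2, hS3]; omega
          exact (Finset.sum_eq_sum_iff_of_le (fun C hC => (ihC C hC).1)).mp this
        obtain ⟨C₁, C₂, hC12, hFeq⟩ := Finset.card_eq_two.mp hkeq
        have hC1 : C₁ ∈ F := by rw [hFeq]; simp
        have hC2 : C₂ ∈ F := by rw [hFeq]; simp
        intro B' hB' hsub hcard'
        by_cases hBB : B' = B
        · subst hBB
          refine ⟨C₁, hFball C₁ hC1, C₂, hFball C₂ hC2, hFdisj C₁ hC1 C₂ hC2 hC12, ?_, ?_⟩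
          · rw [hcover, hFeq]; simp
          · intro x₁ hx₁ x₂ hx₂
            have hle : d x₁ x₂ ≤ setDiam d B' := le_setDiam (hsub ((hFssub C₁ hC1).1 hx₁))
              (hsub ((hFssub C₂ hC2).1 hx₂))
            refine le_antisymm hle (le_of_not_gt ?_)
            intro hlt
            obtain ⟨c₁, hc₁, hCeq⟩ := (hmemF C₁).mp hC1
            have hx2c : x₂ ∈ cls d D x₁ := by
              show d x₂ x₁ < D
              rw [hd.2.1 x₂ x₁, hDdef]
              exact hlt
            have : cls d D x₁ = C₁ := by
              rw [← hCeq]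
              exact cls_eq_of_mem hd (hCeq ▸ hx₁)
            exact Set.disjoint_left.mp (hFdisj C₁ hC1 C₂ hC2 hC12) (this ▸ hx2c) hx₂
        · obtain ⟨c, hc⟩ := ball_nonempty hd hB'
          have hsubC : B' ⊆ cls d D c := subball_subset_cls hd hB hB' hsub hBB hc
          have hCF : cls d D c ∈ F := (hmemF _).mpr ⟨c, hsub hc, rfl⟩
          exact ((ihC _ hCF).2).mp (hall _ hCF) B' hB' hsubC hcard'
      · -- splitting condition implies equality
        intro hcond
        obtain ⟨B₁, hB₁, B₂, hB₂, hdisj12, hunion, hcross⟩ :=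
          hcond B hB (le_refl _) hone
        have hB₁ne := ball_nonempty hd hB₁
        have hB₂ne := ball_nonempty hd hB₂
        have hB₁sub : B₁ ⊆ B := hunion ▸ Set.subset_union_left
        have hB₂sub : B₂ ⊆ B := hunion ▸ Set.subset_union_right
        have hB₁neB : B₁ ≠ B := by
          rintro rfl
          obtain ⟨z, hz⟩ := hB₂ne
          exact Set.disjoint_right.mp hdisj12 hz (hB₂sub hz)
        have hB₂neB : B₂ ≠ B := by
          rintro rfl
          obtain ⟨z, hz⟩ := hB₁ne
          exact Set.disjoint_left.mp hdisj12 hz (hB₁sub hz)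
        obtain ⟨c₁, hc₁⟩ := hB₁ne
        obtain ⟨c₂, hc₂⟩ := hB₂ne
        have hcls1 : cls d D c₁ = B₁ := by
          apply Set.Subset.antisymm
          · intro x hx
            have hx' : d x c₁ < D := hx
            have hxB : x ∈ B := cls_subset hd hB (hB₁sub hc₁) hx
            rcases (hunion ▸ hxB : x ∈ B₁ ∪ B₂) with h | h
            · exact h
            · exfalso
              have := hcross c₁ hc₁ x h
              rw [hd.2.1] at this
              rw [this] at hx'
              exact absurd hx' (lt_irrefl D)
          · exact subball_subset_cls hd hB hB₁ hB₁sub hB₁neB hc₁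
        have hcls2 : cls d D c₂ = B₂ := by
          apply Set.Subset.antisymm
          · intro x hx
            have hx' : d x c₂ < D := hx
            have hxB : x ∈ B := cls_subset hd hB (hB₂sub hc₂) hx
            rcases (hunion ▸ hxB : x ∈ B₁ ∪ B₂) with h | h
            · exfalso
              have := hcross x h c₂ hc₂
              rw [this] at hx'
              exact absurd hx' (lt_irrefl D)
            · exact h
          · exact subball_subset_cls hd hB hB₂ hB₂sub hB₂neB hc₂
        have hB12 : B₁ ≠ B₂ := by
          rintro rfl
          exact Set.disjoint_left.mp hdisj12 hc₁ hc₁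
        have hFeq : F = {B₁, B₂} := by
          apply Finset.ext
          intro C
          rw [hmemF, Finset.mem_insert, Finset.mem_singleton]
          constructor
          · rintro ⟨c, hc, rfl⟩
            rcases (hunion ▸ hc : c ∈ B₁ ∪ B₂) with h | h
            · left; rw [← hcls1]; exact cls_eq_of_mem hd (hcls1 ▸ h)
            · right; rw [← hcls2]; exact cls_eq_of_mem hd (hcls2 ▸ h)
          · rintro (rfl | rfl)
            · exact ⟨c₁, hB₁sub hc₁, hcls1⟩
            · exact ⟨c₂, hB₂sub hc₂, hcls2⟩
        have hkeq : F.card = 2 := by rw [hFeq]; exact Finset.card_pair hB12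
        have hall : ∀ C ∈ F, nb d C + 1 = 2 * C.ncard := by
          intro C hC
          refine ((ihC C hC).2).mpr ?_
          intro B' hB' hsub' hcard'
          exact hcond B' hB' (hsub'.trans (hFssub C hC).1) hcard'
        have : ∑ C ∈ F, (nb d C + 1) = ∑ C ∈ F, 2 * C.ncard :=
          Finset.sum_congr rfl hall
        rw [hS2, hS3] at this
        omega

end UltraProof

/-- For a finite ultrametric space with `|X| ≥ 2` we have `|𝐁_X| ≤ 2|X| − 1`, with
equality iff every nonsingleton ball is a disjoint union of two balls `B₁, B₂` such that
`d x₁ x₂ = diam B` for all `x₁ ∈ B₁`, `x₂ ∈ B₂`. -/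
theorem ballean_card_le_and_eq_iff_strictly_binary {X : Type*} [Fintype X]
    (d : X → X → ℝ) (hd : IsUltrametricOn d) (hcard : 2 ≤ Fintype.card X) :
    (ballean d).ncard + 1 ≤ 2 * Fintype.card X ∧
      ((ballean d).ncard + 1 = 2 * Fintype.card X ↔
        ∀ B ∈ ballean d, 1 < B.ncard →
          ∃ B₁ ∈ ballean d, ∃ B₂ ∈ ballean d, Disjoint B₁ B₂ ∧ B = B₁ ∪ B₂ ∧
            ∀ x₁ ∈ B₁, ∀ x₂ ∈ B₂, d x₁ x₂ = setDiam d B) := by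
  obtain ⟨x0⟩ : Nonempty X := Fintype.card_pos_iff.mp (by omega)
  have huniv : (Set.univ : Set X) ∈ ballean d := by
    refine ⟨x0, setDiam d (Set.univ : Set X),
      UltraProof.setDiam_nonneg hd ⟨x0, trivial⟩, ?_⟩
    ext x
    simp only [Set.mem_univ, true_iff, Set.mem_setOf_eq]
    exact UltraProof.le_setDiam trivial trivial
  have hnb : UltraProof.nb d Set.univ = (ballean d).ncard := by
    unfold UltraProof.nb
    congr 1
    ext B'
    simp
  have hncard : (Set.univ : Set X).ncard = Fintype.card X := by
    rw [Set.ncard_univ, Nat.card_eq_fintype_card]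
  have h := UltraProof.key hd (Set.univ : Set X).ncard Set.univ huniv rfl
  rw [hnb, hncard] at h
  refine ⟨h.1, h.2.trans ?_⟩
  constructor
  · intro hc B hB hcard
    exact hc B hB (Set.subset_univ B) hcard
  · intro hc B hB _ hcard
    exact hc B hB hcard
end

section
/- Let (X,d) be a finite ultrametric space with |X| ≥ 2 and n ≥ 2 an integer. If for every nonsingleton ball B of X there exist pairwise disjoint equidistant balls B_1,...,B_n with B = B_1 ∪ ... ∪ B_n, then the equality (n−1)|B_Y| + 1 = n|Y| holds for every ball Y of X, where B_Y denotes the set of distinct balls of the subspace Y. -/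
/-- The ballean of the subspace `Y ⊆ X`: closed balls of `(Y, d|_Y)`, as subsets of `X`. -/
def balleanOn {X : Type*} (d : X → X → ℝ) (Y : Set X) : Set (Set X) :=
  {B | ∃ c ∈ Y, ∃ r, 0 ≤ r ∧ B = {x ∈ Y | d x c ≤ r}}

lemma ncard_iUnion_fin {X : Type*} [Finite X] {m : ℕ} (s : Fin m → Set X)
    (h : Pairwise fun i j => Disjoint (s i) (s j)) :
    (⋃ i, s i).ncard = ∑ i, (s i).ncard := by
  classical
  have hfin : ∀ i, (s i).Finite := fun i => Set.toFinite _
  have : (⋃ i, s i) = ↑(Finset.univ.biUnion fun i => (hfin i).toFinset) := by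
    ext x; simp [Set.Finite.mem_toFinset]
  rw [this, Set.ncard_coe_finset, Finset.card_biUnion]
  · exact Finset.sum_congr rfl fun i _ => (Set.ncard_eq_toFinset_card _ (hfin i)).symm
  · intro i _ j _ hij
    simpa [Finset.disjoint_left, Set.Finite.mem_toFinset, Set.disjoint_left] using h hij

/-- If every nonsingleton ball of a finite ultrametric space is a union of `n` pairwise
disjoint equidistant balls, then `(n−1)|𝐁_Y| + 1 = n|Y|` for every ball `Y` of `X`. -/
theorem strictly_nary_ball_count {X : Type*} [Fintype X] (d : X → X → ℝ)
    (hd : IsUltrametricOn d) (hcard : 2 ≤ Fintype.card X) (n : ℕ) (hn : 2 ≤ n)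
    (hsplit : ∀ B ∈ ballean d, 1 < B.ncard →
      ∃ Bs : Fin n → Set X, (∀ i, Bs i ∈ ballean d) ∧
        (Pairwise fun i j => Disjoint (Bs i) (Bs j)) ∧
        (∃ r : ℝ, 0 < r ∧ ∀ i j, i ≠ j → ∀ x ∈ Bs i, ∀ y ∈ Bs j, d x y = r) ∧
        B = ⋃ i, Bs i) :
    ∀ Y ∈ ballean d, (n - 1) * (balleanOn d Y).ncard + 1 = n * Y.ncard := by
  obtain ⟨h0, hsymm, heq0, hmax⟩ := hd
  have hrefl : ∀ x, d x x = 0 := fun x => (heq0 x x).mpr rfl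
  have hmemY : ∀ Y ∈ ballean d, Y.Nonempty := by
    rintro Y ⟨c, r, hr, rfl⟩
    exact ⟨c, by simp only [Set.mem_setOf_eq, hrefl c]; exact hr⟩
  have hselfmem : ∀ Y ∈ ballean d, Y ∈ balleanOn d Y := by
    rintro Y ⟨c, r, hr, rfl⟩
    refine ⟨c, by simp only [Set.mem_setOf_eq, hrefl c]; exact hr, r, hr, ?_⟩
    ext x
    simp only [Set.mem_setOf_eq]
    tauto
  have hsubball : ∀ (W : Set X), ∀ Z ∈ balleanOn d W, Z.Nonempty ∧ Z ⊆ W := by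
    rintro W Z ⟨c, hc, r, hr, rfl⟩
    exact ⟨⟨c, hc, by simpa [hrefl c] using hr⟩, fun x hx => hx.1⟩
  have hne2 : 1 < Fintype.card (Fin n) := by simpa using by omega
  suffices H : ∀ k (Y : Set X), Y ∈ ballean d → Y.ncard ≤ k →
      (n - 1) * (balleanOn d Y).ncard + 1 = n * Y.ncard by
    intro Y hY; exact H Y.ncard Y hY le_rfl
  intro k
  induction k with
  | zero =>
    intro Y hY hle
    have := (Set.ncard_pos (Set.toFinite Y)).mpr (hmemY Y hY)
    omega
  | succ k ih =>
    intro Y hY hle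
    have hYpos := (Set.ncard_pos (Set.toFinite Y)).mpr (hmemY Y hY)
    by_cases h1 : Y.ncard ≤ 1
    · -- Y is a singleton
      have hone : Y.ncard = 1 := le_antisymm h1 hYpos
      have hself := hselfmem Y hY
      obtain ⟨a, ha⟩ := Set.ncard_eq_one.mp hone
      have hbon : balleanOn d Y = {Y} := by
        apply Set.Subset.antisymm
        · rintro Z ⟨c, hc, r, hr, rfl⟩
          have hca : c = a := by rw [ha] at hc; exact hc
          subst hca
          have : {x ∈ Y | d x c ≤ r} = Y := by
            apply Set.Subset.antisymm (fun x hx => hx.1)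
            intro x hx
            have hxa : x = c := by rw [ha] at hx; exact hx
            subst hxa
            exact ⟨hx, by rw [hrefl x]; exact hr⟩
          rw [this]; rfl
        · intro Z hZ
          rw [Set.mem_singleton_iff] at hZ
          subst hZ
          exact hself
      rw [hbon, hone, Set.ncard_singleton]
      omega
    · -- Y splits
      push_neg at h1
      obtain ⟨Bs, hB, hdisj, ⟨s, hs, hcross⟩, hU⟩ := hsplit Y hY h1
      have hne : ∀ i, (Bs i).Nonempty := fun i => hmemY _ (hB i)
      have hsubY : ∀ i, Bs i ⊆ Y := by
        intro i
        rw [hU]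
        exact Set.subset_iUnion Bs i
      -- a uniform diameter bound below s on each piece
      have hdiam : ∀ i, ∃ t, 0 ≤ t ∧ t < s ∧ ∀ x ∈ Bs i, ∀ y ∈ Bs i, d x y ≤ t := by
        intro i
        obtain ⟨c, r, hr, hBi⟩ := hB i
        have hcmem : c ∈ Bs i := by
          rw [hBi]; simp only [Set.mem_setOf_eq, hrefl c]; exact hr
        obtain ⟨j, hj⟩ := Fintype.exists_ne_of_one_lt_card hne2 i
        obtain ⟨y, hy⟩ := hne j
        have hrs : r < s := by
          by_contra hcon
          push_neg at hcon
          have : y ∈ Bs i := by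
            rw [hBi]
            exact le_trans (le_of_eq (hcross j i hj y hy c hcmem)) hcon
          exact Set.disjoint_left.mp (hdisj hj) hy this
        refine ⟨r, hr, hrs, fun x hx y' hy' => ?_⟩
        rw [hBi] at hx hy'
        calc d x y' ≤ max (d x c) (d c y') := hmax x y' c
          _ ≤ r := max_le hx (by rw [hsymm c y']; exact hy')
      -- decomposition of the ballean of Y
      have hdecomp : balleanOn d Y = insert Y (⋃ i, balleanOn d (Bs i)) := by
        apply Set.Subset.antisymm
        · rintro Z ⟨c, hc, r, hr, rfl⟩
          have hc' : c ∈ ⋃ i, Bs i := hU ▸ hc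
          obtain ⟨i, hci⟩ := Set.mem_iUnion.mp hc'
          by_cases hrs : r < s
          · refine Set.mem_insert_iff.mpr (Or.inr (Set.mem_iUnion.mpr ⟨i, c, hci, r, hr, ?_⟩))
            ext x
            simp only [Set.mem_setOf_eq]
            constructor
            · rintro ⟨hxY, hxr⟩
              refine ⟨?_, hxr⟩
              have hx' : x ∈ ⋃ i, Bs i := hU ▸ hxY
              obtain ⟨j, hxj⟩ := Set.mem_iUnion.mp hx'
              rcases eq_or_ne j i with rfl | hji
              · exact hxj
              · exact absurd hxr (by rw [hcross j i hji x hxj c hci]; exact not_le.mpr hrs)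
            · rintro ⟨hxB, hxr⟩
              exact ⟨hsubY i hxB, hxr⟩
          · push_neg at hrs
            have : {x ∈ Y | d x c ≤ r} = Y := by
              apply Set.Subset.antisymm (fun x hx => hx.1)
              intro x hxY
              refine ⟨hxY, ?_⟩
              have hx' : x ∈ ⋃ i, Bs i := hU ▸ hxY
              obtain ⟨j, hxj⟩ := Set.mem_iUnion.mp hx'
              rcases eq_or_ne j i with rfl | hji
              · obtain ⟨t, ht0, hts, htd⟩ := hdiam j
                exact le_trans (htd x hxj c hci) (le_trans hts.le hrs)
              · rw [hcross j i hji x hxj c hci]; exact hrs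
            rw [this]
            exact Set.mem_insert _ _
        · intro Z hZ
          rcases Set.mem_insert_iff.mp hZ with rfl | hZ
          · exact hselfmem Z hY
          · obtain ⟨i, hZi⟩ := Set.mem_iUnion.mp hZ
            obtain ⟨c, hci, r, hr, rfl⟩ := hZi
            obtain ⟨t, ht0, hts, htd⟩ := hdiam i
            refine ⟨c, hsubY i hci, min r t, le_min hr ht0, ?_⟩
            ext x
            simp only [Set.mem_setOf_eq, le_min_iff]
            constructor
            · rintro ⟨hxB, hxr⟩
              exact ⟨hsubY i hxB, hxr, htd x hxB c hci⟩
            · rintro ⟨hxY, hxr, hxt⟩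
              have hx' : x ∈ ⋃ i, Bs i := hU ▸ hxY
              obtain ⟨j, hxj⟩ := Set.mem_iUnion.mp hx'
              rcases eq_or_ne j i with rfl | hji
              · exact ⟨hxj, hxr⟩
              · exact absurd hxt (by rw [hcross j i hji x hxj c hci]; exact not_le.mpr hts)
      have hYnot : Y ∉ ⋃ i, balleanOn d (Bs i) := by
        rw [Set.mem_iUnion]
        rintro ⟨i, hYi⟩
        have hYsub : Y ⊆ Bs i := (hsubball _ _ hYi).2
        obtain ⟨j, hj⟩ := Fintype.exists_ne_of_one_lt_card hne2 i
        obtain ⟨y, hy⟩ := hne j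
        exact Set.disjoint_left.mp (hdisj hj) hy (hYsub (hsubY j hy))
      have hfamdisj : Pairwise fun i j => Disjoint (balleanOn d (Bs i)) (balleanOn d (Bs j)) := by
        intro i j hij
        rw [Set.disjoint_left]
        intro Z hZi hZj
        obtain ⟨⟨z, hz⟩, hsubi⟩ := hsubball _ Z hZi
        exact Set.disjoint_left.mp (hdisj hij) (hsubi hz) ((hsubball _ Z hZj).2 hz)
      have hcount1 : (balleanOn d Y).ncard = (⋃ i, balleanOn d (Bs i)).ncard + 1 := by
        rw [hdecomp]
        exact Set.ncard_insert_of_notMem hYnot (Set.toFinite _)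
      have hcount1' : (⋃ i, balleanOn d (Bs i)).ncard = ∑ i, (balleanOn d (Bs i)).ncard :=
        ncard_iUnion_fin _ hfamdisj
      have hcount2 : Y.ncard = ∑ i, (Bs i).ncard := by
        rw [hU]; exact ncard_iUnion_fin _ hdisj
      have hIH : ∀ i, (n - 1) * (balleanOn d (Bs i)).ncard + 1 = n * (Bs i).ncard := by
        intro i
        apply ih _ (hB i)
        have hlt : (Bs i).ncard < Y.ncard := by
          apply Set.ncard_lt_ncard _ (Set.toFinite Y)
          refine ⟨hsubY i, fun hcon => ?_⟩
          obtain ⟨j, hj⟩ := Fintype.exists_ne_of_one_lt_card hne2 i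
          obtain ⟨y, hy⟩ := hne j
          exact Set.disjoint_left.mp (hdisj hj) hy (hcon (hsubY j hy))
        omega
      obtain ⟨m, rfl⟩ : ∃ m, n = m + 1 := ⟨n - 1, by omega⟩
      have hsum : ∑ i : Fin (m + 1), ((m + 1 - 1) * (balleanOn d (Bs i)).ncard + 1)
          = ∑ i : Fin (m + 1), (m + 1) * (Bs i).ncard :=
        Finset.sum_congr rfl fun i _ => hIH i
      rw [Finset.sum_add_distrib, ← Finset.mul_sum, ← Finset.mul_sum,
        Finset.sum_const, Finset.card_univ, Fintype.card_fin, smul_eq_mul, mul_one] at hsum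
      rw [hcount1, hcount1', hcount2, ← hsum]
      simp only [Nat.add_sub_cancel]
      ring
end

section
/- Let T be a tree (connected acyclic graph) with a labeling l : V(T) → [0,∞), and define d_l(u,v) = 0 if u = v and d_l(u,v) = max of l over the vertices of the unique path from u to v otherwise. Then d_l is an ultrametric on V(T) if and only if max{l(u), l(v)} > 0 for every edge {u,v} of T. -/
/-!
Off the diagonal, `d_l(u, v)` is the label of some vertex of the path from `u` to `v`, and it
bounds every label on that path. Since any walk contains a path with the same ends, `d_l(x, y)` is
the label of a vertex on the concatenation of the paths `x → z` and `z → y`, which gives the strong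
triangle inequality. If every edge carries a positive label, the first edge of the path from `x`
to `y ≠ x` makes `d_l(x, y)` positive; conversely, on an edge `{u, v}` the distance is `l u` or
`l v`, so it can only be positive if one of them is.
-/

namespace SimpleGraph

variable {V : Type*} {G : SimpleGraph V} {l : V → ℝ} {D : V → V → ℝ}

def IsMaxLabelOnPaths (G : SimpleGraph V) (l : V → ℝ) (D : V → V → ℝ) : Prop :=
  ∀ u v, u ≠ v → ∀ p : G.Walk u v, p.IsPath → (D u v : WithBot ℝ) = (p.support.map l).maximum

namespace IsMaxLabelOnPaths

variable {u v x y z : V}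

theorem label_le (hD : G.IsMaxLabelOnPaths l D) (hne : u ≠ v) {p : G.Walk u v} (hp : p.IsPath)
    {x : V} (hx : x ∈ p.support) : l x ≤ D u v :=
  (List.maximum_eq_coe_iff.mp (hD u v hne p hp).symm).2 _ (List.mem_map_of_mem hx)

theorem exists_mem_support_eq_label (hD : G.IsMaxLabelOnPaths l D) (hne : u ≠ v)
    (p : G.Walk u v) : ∃ w ∈ p.support, D u v = l w := by
  classical
  obtain ⟨w, hw, hlw⟩ := List.mem_map.mp
    (List.maximum_eq_coe_iff.mp (hD u v hne p.bypass p.bypass_isPath).symm).1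
  exact ⟨w, p.support_bypass_subset_support hw, hlw.symm⟩

theorem le_swap (hD : G.IsMaxLabelOnPaths l D) (hne : u ≠ v) (h : G.Reachable u v) :
    D u v ≤ D v u := by
  obtain ⟨p, hp⟩ := h.exists_isPath
  obtain ⟨w, hw, hDw⟩ := hD.exists_mem_support_eq_label hne p
  exact hDw ▸ hD.label_le hne.symm hp.reverse (by simpa [Walk.support_reverse] using hw)

theorem pos_of_ne (hD : G.IsMaxLabelOnPaths l D) (hpos : ∀ u v, G.Adj u v → 0 < max (l u) (l v))
    (hne : u ≠ v) (h : G.Reachable u v) : 0 < D u v := by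
  obtain ⟨p, hp⟩ := h.exists_isPath
  cases p with
  | nil => exact absurd rfl hne
  | @cons _ w _ hadj _ =>
    calc 0 < max (l u) (l w) := hpos u w hadj
      _ ≤ D u v := max_le (hD.label_le hne hp (Walk.start_mem_support _))
          (hD.label_le hne hp (by simp))

theorem le_max_of_ne (hD : G.IsMaxLabelOnPaths l D) (hxy : x ≠ y) (hxz : x ≠ z) (hzy : z ≠ y)
    (hconn : G.Connected) : D x y ≤ max (D x z) (D z y) := by
  obtain ⟨q, hq⟩ := (hconn x z).exists_isPath
  obtain ⟨r, hr⟩ := (hconn z y).exists_isPath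
  obtain ⟨w, hw, hDw⟩ := hD.exists_mem_support_eq_label hxy (q.append r)
  rw [hDw]
  rcases (Walk.mem_support_append_iff q r).mp hw with hwq | hwr
  · exact le_max_of_le_left (hD.label_le hxz hq hwq)
  · exact le_max_of_le_right (hD.label_le hzy hr hwr)

theorem isUltrametricOn (hD : G.IsMaxLabelOnPaths l D) (hconn : G.Connected)
    (hD0 : ∀ u, D u u = 0) (hpos : ∀ u v, G.Adj u v → 0 < max (l u) (l v)) :
    IsUltrametricOn D := by
  have hD_pos : ∀ x y, x ≠ y → 0 < D x y := fun x y hne => hD.pos_of_ne hpos hne (hconn x y)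
  have hnn : ∀ x y, 0 ≤ D x y := fun x y => by
    rcases eq_or_ne x y with rfl | hne
    · exact (hD0 x).ge
    · exact (hD_pos x y hne).le
  refine ⟨hnn, fun x y => ?_, fun x y => ⟨fun h => ?_, fun h => h ▸ hD0 x⟩, fun x y z => ?_⟩
  · rcases eq_or_ne x y with rfl | hne
    · rfl
    · exact (hD.le_swap hne (hconn x y)).antisymm (hD.le_swap hne.symm (hconn y x))
  · by_contra hne
    exact (hD_pos x y hne).ne' h
  · rcases eq_or_ne x y with rfl | hxy
    · exact (hD0 x).trans_le (le_max_of_le_left (hnn x z))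
    rcases eq_or_ne x z with rfl | hxz
    · exact le_max_right _ _
    rcases eq_or_ne z y with rfl | hzy
    · exact le_max_left _ _
    exact hD.le_max_of_ne hxy hxz hzy hconn

theorem pos_max_label_of_adj (hD : G.IsMaxLabelOnPaths l D) (hU : IsUltrametricOn D)
    (hadj : G.Adj u v) : 0 < max (l u) (l v) := by
  obtain ⟨hnn, -, heq, -⟩ := hU
  obtain ⟨w, hw, hDw⟩ := hD.exists_mem_support_eq_label hadj.ne (.cons hadj .nil)
  have hle : D u v ≤ max (l u) (l v) := by
    rcases List.mem_pair.mp (by simpa using hw) with rfl | rfl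
    · exact hDw ▸ le_max_left _ _
    · exact hDw ▸ le_max_right _ _
  exact ((hnn u v).lt_of_ne (Ne.symm (mt (heq u v).mp hadj.ne))).trans_le hle

end IsMaxLabelOnPaths

end SimpleGraph

theorem labeled_tree_ultrametric_iff_general {V : Type*} (G : SimpleGraph V)
    (hT : G.IsTree) (l : V → ℝ) (D : V → V → ℝ)
    (hD0 : ∀ u, D u u = 0)
    (hDpath : ∀ u v, u ≠ v → ∀ p : G.Walk u v, p.IsPath →
      (D u v : WithBot ℝ) = (p.support.map l).maximum) :
    IsUltrametricOn D ↔ ∀ u v, G.Adj u v → 0 < max (l u) (l v) := by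
  have hD : G.IsMaxLabelOnPaths l D := hDpath
  exact ⟨fun hU _ _ => hD.pos_max_label_of_adj hU, hD.isUltrametricOn hT.connected hD0⟩

/-- Let `T` be a finite tree with a nonnegative labeling `l`, and let `D = d_l` be the
function with `D u u = 0` and, for `u ≠ v`, `D u v` the maximum label over the vertices
of the (unique) path joining `u` and `v`. Then `D` is an ultrametric on the vertex set
iff `max (l u) (l v) > 0` for every edge `{u,v}` of `T`. -/
theorem labeled_tree_ultrametric_iff {V : Type*} [Fintype V] (G : SimpleGraph V)
    (hT : G.IsTree) (l : V → ℝ) (hl : ∀ v, 0 ≤ l v) (D : V → V → ℝ)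
    (hD0 : ∀ u, D u u = 0)
    (hDpath : ∀ u v, u ≠ v → ∀ p : G.Walk u v, p.IsPath →
      (D u v : WithBot ℝ) = (p.support.map l).maximum) :
    IsUltrametricOn D ↔ ∀ u v, G.Adj u v → 0 < max (l u) (l v) :=
  labeled_tree_ultrametric_iff_general G hT l D hD0 hDpath
end

section
/- Let T be a finite tree with labeling l : V(T) → [0,∞) such that max{l(u),l(v)} > 0 for every edge {u,v}, and let d_l be the associated ultrametric on V(T). Then for every ball B of (V(T), d_l) with |B| ≥ 2, there exists a point z ∈ B such that d_l(z,t) = diam B for all t ∈ B \ {z}. -/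
/-! The diameter `M` of a finite ball `B` is attained by a pair `x, y ∈ B`. On the tree path
from `x` to `y` some vertex `w` carries the label `M`; the subpath from `x` to `w` shows
`d(x, w) ≤ M`, so `w` lies in `B` by the ultrametric inequality. Every path from `w` contains `w`,
so `d(w, t) ≥ l(w) = M`, while `d(w, t) ≤ M` as both points lie in `B`. If `M = 0`, the ball is a
single point. -/

section Ultrametric

variable {X : Type*} {d : X → X → ℝ}

theorem IsUltrametricOn.dist_le_of_mem_ball (hd : IsUltrametricOn d) {c x y : X} {r : ℝ}
    (hx : d x c ≤ r) (hy : d y c ≤ r) : d x y ≤ r :=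
  (hd.2.2.2 x y c).trans (max_le hx (hd.2.1 c y ▸ hy))

theorem IsUltrametricOn.mem_ball_of_dist_le (hd : IsUltrametricOn d) {c x w : X} {r : ℝ}
    (hx : d x c ≤ r) (hxw : d x w ≤ r) : d w c ≤ r :=
  (hd.2.2.2 w c x).trans (max_le (hd.2.1 x w ▸ hxw) hx)

end Ultrametric

theorem Set.Finite.exists_dist_eq_setDiam {X : Type*} {d : X → X → ℝ} {B : Set X}
    (hB : B.Finite) (hne : B.Nonempty) :
    ∃ x ∈ B, ∃ y ∈ B, d x y = setDiam d B ∧ ∀ a ∈ B, ∀ b ∈ B, d a b ≤ d x y := by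
  obtain ⟨⟨x, y⟩, ⟨hx, hy⟩, hmax⟩ :=
    (hB.prod hB).exists_maximalFor (fun p : X × X => d p.1 p.2) _ (hne.prod hne)
  have hle : ∀ a ∈ B, ∀ b ∈ B, d a b ≤ d x y := fun a ha b hb =>
    le_of_not_gt fun h => (hmax (j := (a, b)) ⟨ha, hb⟩ h.le).not_gt h
  have hgreatest : IsGreatest {r | ∃ a ∈ B, ∃ b ∈ B, d a b = r} (d x y) := by
    refine ⟨⟨x, hx, y, hy, rfl⟩, ?_⟩
    rintro _ ⟨a, ha, b, hb, rfl⟩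
    exact hle a ha b hb
  exact ⟨x, hx, y, hy, hgreatest.csSup_eq.symm, hle⟩

/-- `D` agrees with the paper's `d_l` off the diagonal. -/
def IsLabelDist {V : Type*} (G : SimpleGraph V) (l : V → ℝ) (D : V → V → ℝ) : Prop :=
  ∀ u v, u ≠ v → ∀ p : G.Walk u v, p.IsPath → (D u v : WithBot ℝ) = (p.support.map l).maximum

namespace IsLabelDist

variable {V : Type*} {G : SimpleGraph V} {l : V → ℝ} {D : V → V → ℝ}

theorem label_le (hD : IsLabelDist G l D) {u v w : V} (huv : u ≠ v) {p : G.Walk u v}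
    (hp : p.IsPath) (hw : w ∈ p.support) : l w ≤ D u v := by
  have h := List.le_maximum_of_mem' (List.mem_map_of_mem (f := l) hw)
  rw [← hD u v huv p hp] at h
  exact_mod_cast h

theorem exists_label_eq (hD : IsLabelDist G l D) {u v : V} (huv : u ≠ v) {p : G.Walk u v}
    (hp : p.IsPath) : ∃ w ∈ p.support, l w = D u v := by
  obtain ⟨a, ha, hla⟩ := List.mem_map.mp (List.maximum_mem (hD u v huv p hp).symm)
  exact ⟨a, ha, hla⟩

theorem dist_le_of_mem_support [DecidableEq V] (hD : IsLabelDist G l D) {u v w : V} (huv : u ≠ v)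
    (huw : u ≠ w) {p : G.Walk u v} (hp : p.IsPath) (hw : w ∈ p.support) : D u w ≤ D u v := by
  have h : (D u w : WithBot ℝ) ≤ D u v := by
    rw [hD u w huw _ (hp.takeUntil hw)]
    refine List.maximum_le_of_forall_le fun a ha => ?_
    obtain ⟨t, ht, rfl⟩ := List.mem_map.mp ha
    exact WithBot.coe_le_coe.mpr (hD.label_le huv hp (p.support_takeUntil_subset_support hw ht))
  exact_mod_cast h

end IsLabelDist

theorem labeled_tree_ball_has_diametrical_point_general {V : Type*} [Fintype V]
    (G : SimpleGraph V) (hT : G.IsTree) (l : V → ℝ) (D : V → V → ℝ)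
    (hDpath : ∀ u v, u ≠ v → ∀ p : G.Walk u v, p.IsPath →
      (D u v : WithBot ℝ) = (p.support.map l).maximum)
    (hD : IsUltrametricOn D) (B : Set V) (hB : B ∈ ballean D) :
    ∃ z ∈ B, ∀ t ∈ B, t ≠ z → D z t = setDiam D B := by
  classical
  have hDl : IsLabelDist G l D := hDpath
  obtain ⟨c, r, hr, rfl⟩ := hB
  have hc : D c c ≤ r := (hD.dist_self c).symm ▸ hr
  obtain ⟨x, hx, y, hy, hdiam, hle⟩ := (Set.toFinite {v | D v c ≤ r}).exists_dist_eq_setDiam ⟨c, hc⟩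
  rcases eq_or_ne x y with rfl | hxy
  · refine ⟨x, hx, fun t ht htx => (htx ?_).elim⟩
    exact (hD.2.2.1 t x).mp (le_antisymm (hD.dist_self x ▸ hle t ht x hx) (hD.1 t x))
  obtain ⟨p, hp, -⟩ := hT.existsUnique_path x y
  obtain ⟨w, hwp, hlw⟩ := hDl.exists_label_eq hxy hp
  have hMr : D x y ≤ r := hD.dist_le_of_mem_ball hx hy
  have hw : D w c ≤ r := by
    rcases eq_or_ne x w with rfl | hxw
    · exact hx
    · exact hD.mem_ball_of_dist_le hx ((hDl.dist_le_of_mem_support hxy hxw hp hwp).trans hMr)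
  refine ⟨w, hw, fun t ht htw => ?_⟩
  rw [← hdiam]
  refine le_antisymm (hD.2.1 w t ▸ hle t ht w hw) ?_
  obtain ⟨q, hq, -⟩ := hT.existsUnique_path w t
  exact hlw ▸ hDl.label_le htw.symm hq q.start_mem_support

/-- Let `T` be a finite tree with nonnegative labeling `l` satisfying
`max (l u) (l v) > 0` for every edge, and let `D = d_l` be the associated ultrametric
(max label over the unique joining path). Then every ball `B` with `|B| ≥ 2` contains a
point `z` with `D z t = diam B` for all `t ∈ B \ {z}`. -/
theorem labeled_tree_ball_has_diametrical_point {V : Type*} [Fintype V]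
    (G : SimpleGraph V) (hT : G.IsTree) (l : V → ℝ) (hl : ∀ v, 0 ≤ l v)
    (hedge : ∀ u v, G.Adj u v → 0 < max (l u) (l v)) (D : V → V → ℝ)
    (hD0 : ∀ u, D u u = 0)
    (hDpath : ∀ u v, u ≠ v → ∀ p : G.Walk u v, p.IsPath →
      (D u v : WithBot ℝ) = (p.support.map l).maximum)
    (hD : IsUltrametricOn D) (B : Set V) (hB : B ∈ ballean D) (hB2 : 2 ≤ B.ncard) :
    ∃ z ∈ B, ∀ t ∈ B, t ≠ z → D z t = setDiam D B :=
  labeled_tree_ball_has_diametrical_point_general G hT l D hDpath hD B hB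
end
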